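/- arXiv:1811.05595 — 5 statements merged into one kernel-verified Lean document; each statement's English description precedes it below -/
import Mathlib

section
/- Let ε > 0 and θ ∈ ℝ. Let q, a, s be real random variables with q ≥ 0 almost surely, a and s bounded almost surely, the pair (a, s) independent of q, and E[e^{θεq}] < ∞. Define q⁺ := max(q + a − s, 0) and u := q⁺ − (q + a − s). If q⁺ is identically distributed with q, then E[e^{θεq}]·(1 − E[e^{θε(a−s)}]) = 1 − E[e^{−θεu}]. -/
/-!
Write `x = q + a - s`, so that `q⁺ = max x 0` and `u = max x 0 - x`. Pointwise,
`e^{t q⁺} + e^{-t u} = e^{t x} + 1` since one of `q⁺`, `u` vanishes. Taking expectations,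
stationarity turns `E[e^{t q⁺}]` into `E[e^{t q}]`, and independence factors
`E[e^{t x}] = E[e^{t (a - s)}] E[e^{t q}]`.
-/

open MeasureTheory ProbabilityTheory Real

lemma exp_mul_max_zero_add_exp_neg_mul_max_zero_sub (t x : ℝ) :
    exp (t * max x 0) + exp (-t * (max x 0 - x)) = exp (t * x) + 1 := by
  rcases le_total 0 x with hx | hx
  · simp [max_eq_left hx, add_comm]
  · simp [max_eq_right hx, add_comm]

namespace ProbabilityTheory

variable {Ω Ω' : Type*} {m : MeasurableSpace Ω} {m' : MeasurableSpace Ω'}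

lemma IdentDistrib.mgf_eq {μ : Measure Ω} {ν : Measure Ω'} {X : Ω → ℝ} {Y : Ω' → ℝ}
    (h : IdentDistrib X Y μ ν) (t : ℝ) : mgf X μ t = mgf Y ν t :=
  (h.comp (measurable_const_mul t).exp).integral_eq

lemma IdentDistrib.integrable_exp_mul_iff {μ : Measure Ω} {ν : Measure Ω'} {X : Ω → ℝ}
    {Y : Ω' → ℝ} (h : IdentDistrib X Y μ ν) (t : ℝ) :
    Integrable (fun ω ↦ exp (t * X ω)) μ ↔ Integrable (fun ω ↦ exp (t * Y ω)) ν :=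
  (h.comp (measurable_const_mul t).exp).integrable_iff

lemma integral_exp_neg_mul_max_zero_sub {μ : Measure Ω} [IsProbabilityMeasure μ]
    {X : Ω → ℝ} {t : ℝ} (hX : Integrable (fun ω ↦ exp (t * X ω)) μ)
    (hXpos : Integrable (fun ω ↦ exp (t * max (X ω) 0)) μ) :
    ∫ ω, exp (-t * (max (X ω) 0 - X ω)) ∂μ = mgf X μ t + 1 - mgf (fun ω ↦ max (X ω) 0) μ t := by
  have hpt : (fun ω ↦ exp (-t * (max (X ω) 0 - X ω)))
      = fun ω ↦ exp (t * X ω) + 1 - exp (t * max (X ω) 0) := by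
    funext ω
    rw [← exp_mul_max_zero_add_exp_neg_mul_max_zero_sub t (X ω)]
    ring
  rw [hpt, integral_sub (f := fun ω ↦ exp (t * X ω) + 1) (hX.add (integrable_const 1)) hXpos,
    integral_add hX (integrable_const 1)]
  simp [mgf]

end ProbabilityTheory

theorem stmt3_general {Ω : Type*} [MeasurableSpace Ω] (P : Measure Ω) [IsProbabilityMeasure P]
    (ε θ : ℝ)
    (q a s : Ω → ℝ)
    (hmq : Measurable q) (hma : Measurable a) (hms : Measurable s)
    (Ca Cs : ℝ)
    (ha_bdd : ∀ᵐ ω ∂P, |a ω| ≤ Ca) (hs_bdd : ∀ᵐ ω ∂P, |s ω| ≤ Cs)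
    (hindep : IndepFun (fun ω => (a ω, s ω)) q P)
    (hmgf : Integrable (fun ω => Real.exp (θ * ε * q ω)) P)
    (hstat : Measure.map (fun ω => max (q ω + a ω - s ω) 0) P = Measure.map q P) :
    (∫ ω, Real.exp (θ * ε * q ω) ∂P)
        * (1 - ∫ ω, Real.exp (θ * ε * (a ω - s ω)) ∂P)
      = 1 - ∫ ω, Real.exp (-(θ * ε)
          * (max (q ω + a ω - s ω) 0 - (q ω + a ω - s ω))) ∂P := by
  set t := θ * ε
  have hstep : IdentDistrib (fun ω ↦ max (q ω + a ω - s ω) 0) q P P :=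
    ⟨(((hmq.add hma).sub hms).max measurable_const).aemeasurable, hmq.aemeasurable, hstat⟩
  have hindep_net : IndepFun (fun ω ↦ a ω - s ω) q P :=
    hindep.comp (measurable_fst.sub measurable_snd) measurable_id
  have hnet : ∀ᵐ ω ∂P, a ω - s ω ∈ Set.Icc (-(Ca + Cs)) (Ca + Cs) := by
    filter_upwards [ha_bdd, hs_bdd] with ω ha hs
    exact abs_le.mp ((abs_sub _ _).trans (add_le_add ha hs))
  have hnet_int : Integrable (fun ω ↦ exp (t * (a ω - s ω))) P :=
    integrable_exp_mul_of_mem_Icc (hma.sub hms).aemeasurable hnet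
  have hx : (fun ω ↦ q ω + a ω - s ω) = (fun ω ↦ a ω - s ω) + q := by
    funext ω; simp only [Pi.add_apply]; ring
  have hx_int : Integrable (fun ω ↦ exp (t * (q ω + a ω - s ω))) P :=
    (hx ▸ hindep_net.integrable_exp_mul_add hnet_int hmgf :)
  rw [integral_exp_neg_mul_max_zero_sub hx_int ((hstep.integrable_exp_mul_iff t).mpr hmgf),
    hstep.mgf_eq, hx, hindep_net.mgf_add hnet_int.aestronglyMeasurable hmgf.aestronglyMeasurable]
  simp only [mgf]
  ring

/-- All-traffic MGF identity for the single server queue: with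
`q⁺ = max(q + a − s, 0)`, `u = q⁺ − (q + a − s)` and `q⁺` distributed as `q`,
`E[e^{θεq}] (1 − E[e^{θε(a−s)}]) = 1 − E[e^{−θεu}]`. -/
theorem stmt3 {Ω : Type*} [MeasurableSpace Ω] (P : Measure Ω) [IsProbabilityMeasure P]
    (ε θ : ℝ) (hε : 0 < ε)
    (q a s : Ω → ℝ)
    (hmq : Measurable q) (hma : Measurable a) (hms : Measurable s)
    (hq0 : ∀ᵐ ω ∂P, 0 ≤ q ω)
    (Ca Cs : ℝ)
    (ha_bdd : ∀ᵐ ω ∂P, |a ω| ≤ Ca) (hs_bdd : ∀ᵐ ω ∂P, |s ω| ≤ Cs)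
    (hindep : IndepFun (fun ω => (a ω, s ω)) q P)
    (hmgf : Integrable (fun ω => Real.exp (θ * ε * q ω)) P)
    (hstat : Measure.map (fun ω => max (q ω + a ω - s ω) 0) P = Measure.map q P) :
    (∫ ω, Real.exp (θ * ε * q ω) ∂P)
        * (1 - ∫ ω, Real.exp (θ * ε * (a ω - s ω)) ∂P)
      = 1 - ∫ ω, Real.exp (-(θ * ε)
          * (max (q ω + a ω - s ω) 0 - (q ω + a ω - s ω))) ∂P :=
  stmt3_general P ε θ q a s hmq hma hms Ca Cs ha_bdd hs_bdd hindep hmgf hstat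
end

section
/- Fix constants μ > 0, σ_a, σ_s ≥ 0 with σ_a² + σ_s² > 0, and A_max, S_max > 0. For each ε ∈ (0, μ), let q_ε, a_ε, s_ε be real random variables such that: q_ε ≥ 0 a.s.; 0 ≤ a_ε ≤ A_max and 0 ≤ s_ε ≤ S_max a.s.; the pair (a_ε, s_ε) is independent of q_ε and a_ε is independent of s_ε; E[a_ε] = μ − ε, E[s_ε] = μ, Var(s_ε) = σ_s², and Var(a_ε) → σ_a² as ε → 0⁺; q_ε⁺ := max(q_ε + a_ε − s_ε, 0) is identically distributed with q_ε; and there exists Θ > 0, independent of ε, with E[exp(θ ε q_ε)] < ∞ for all |θ| ≤ Θ. Then for every θ with |θ| ≤ Θ and θ·(σ_a² + σ_s²)/2 < 1, lim_{ε→0⁺} E[e^{θ ε q_ε}] = 1/(1 − θ(σ_a² + σ_s²)/2). -/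
open MeasureTheory ProbabilityTheory Filter Topology

/-!
Let `u = q⁺ - (q + a - s)` be the unused service; `0 ≤ u ≤ s` and `u = 0` unless `q⁺ = 0`, so
`exp (t q⁺) = exp (t (q + a - s)) + 1 - exp (-t u)`. Taking expectations, stationarity and
independence give `E[e^{tq}] (1 - E[e^{t(a-s)}]) = 1 - E[e^{-tu}]`, while `E[q⁺] = E[q]` gives
`E[u] = E[s] - E[a] = ε`. At `t = θε` a second-order expansion of the mgf of the bounded
variable `a - s` (mean `-ε`, second moment `→ σ_a² + σ_s²`) shows
`1 - E[e^{t(a-s)}] = ε² θ (1 - θ m) + o(ε²)`, and a first-order expansion of the mgf of `u`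
shows `1 - E[e^{-tu}] = ε² θ + O(ε³)`; the quotient tends to `1 / (1 - θ m)`, where
`m = (σ_a² + σ_s²) / 2`.
-/

lemma Real.abs_exp_sub_one_sub_id_sub_sq_div_two_le {x : ℝ} (hx : |x| ≤ 1) :
    |Real.exp x - 1 - x - x ^ 2 / 2| ≤ |x| ^ 3 := by
  have h := Real.exp_bound hx (n := 3) (by norm_num)
  norm_num [Finset.sum_range_succ, Nat.factorial] at h
  calc |Real.exp x - 1 - x - x ^ 2 / 2| = |Real.exp x - (1 + x + x ^ 2 / 2)| := by ring_nf
    _ ≤ |x| ^ 3 * (2 / 9) := h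
    _ ≤ |x| ^ 3 := by nlinarith [pow_nonneg (abs_nonneg x) 3]

lemma Real.exp_mul_max_zero (t z : ℝ) :
    Real.exp (t * max z 0) = Real.exp (t * z) + 1 - Real.exp (-t * (max z 0 - z)) := by
  rcases le_total 0 z with hz | hz
  · simp [max_eq_left hz]
  · simp [max_eq_right hz]

section MgfExpansion

variable {Ω : Type*} [MeasurableSpace Ω] {P : Measure Ω} [IsProbabilityMeasure P]

lemma abs_mgf_sub_one_sub_mul_integral_le {Y : Ω → ℝ} (hY : Measurable Y) {C t : ℝ}
    (hYC : ∀ᵐ ω ∂P, Y ω ∈ Set.Icc 0 C) (ht : |t| * C ≤ 1) :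
    |mgf Y P t - (1 + t * ∫ ω, Y ω ∂P)| ≤ t ^ 2 * C * ∫ ω, Y ω ∂P := by
  have hYint : Integrable Y P := .of_mem_Icc _ _ hY.aemeasurable hYC
  have hexp : Integrable (fun ω => Real.exp (t * Y ω)) P :=
    integrable_exp_mul_of_mem_Icc hY.aemeasurable hYC
  have hsplit : mgf Y P t - (1 + t * ∫ ω, Y ω ∂P)
      = ∫ ω, (Real.exp (t * Y ω) - 1 - t * Y ω) ∂P := by
    rw [integral_sub (f := fun ω => Real.exp (t * Y ω) - 1) (hexp.sub (integrable_const 1))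
        (hYint.const_mul t),
      integral_sub hexp (integrable_const 1), integral_const_mul, mgf]
    simp only [integral_const, probReal_univ, smul_eq_mul, one_mul]
    ring
  rw [hsplit, ← integral_const_mul]
  refine (abs_integral_le_integral_abs).trans (integral_mono_ae
    (hexp.sub (integrable_const 1) |>.sub (hYint.const_mul t)).abs
    (hYint.const_mul _) ?_)
  filter_upwards [hYC] with ω ⟨hY0, hYC⟩
  have htY : |t * Y ω| ≤ 1 := by
    rw [abs_mul, abs_of_nonneg hY0]
    exact (mul_le_mul_of_nonneg_left hYC (abs_nonneg t)).trans ht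
  calc |Real.exp (t * Y ω) - 1 - t * Y ω| ≤ (t * Y ω) ^ 2 := Real.abs_exp_sub_one_sub_id_le htY
    _ = t ^ 2 * (Y ω * Y ω) := by ring
    _ ≤ t ^ 2 * C * Y ω := by rw [mul_assoc]; gcongr

lemma abs_mgf_sub_one_sub_mul_integral_sub_sq_le {X : Ω → ℝ} (hX : Measurable X) {B t : ℝ}
    (hXB : ∀ᵐ ω ∂P, |X ω| ≤ B) (ht : |t| * B ≤ 1) :
    |mgf X P t - (1 + t * ∫ ω, X ω ∂P + t ^ 2 / 2 * ∫ ω, X ω ^ 2 ∂P)| ≤ |t| ^ 3 * B ^ 3 := by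
  have hIcc : ∀ᵐ ω ∂P, X ω ∈ Set.Icc (-B) B := hXB.mono fun _ h => abs_le.mp h
  have hXint : Integrable X P := .of_mem_Icc _ _ hX.aemeasurable hIcc
  have hX2int : Integrable (fun ω => X ω ^ 2) P :=
    (memLp_of_bounded hIcc hX.aestronglyMeasurable 2).integrable_sq
  have hexp : Integrable (fun ω => Real.exp (t * X ω)) P :=
    integrable_exp_mul_of_mem_Icc hX.aemeasurable hIcc
  have hsplit : mgf X P t - (1 + t * ∫ ω, X ω ∂P + t ^ 2 / 2 * ∫ ω, X ω ^ 2 ∂P)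
      = ∫ ω, (Real.exp (t * X ω) - 1 - t * X ω - t ^ 2 / 2 * X ω ^ 2) ∂P := by
    rw [integral_sub (f := fun ω => Real.exp (t * X ω) - 1 - t * X ω)
        ((hexp.sub (integrable_const 1)).sub (hXint.const_mul t)) (hX2int.const_mul (t ^ 2 / 2)),
      integral_sub (f := fun ω => Real.exp (t * X ω) - 1) (hexp.sub (integrable_const 1))
        (hXint.const_mul t),
      integral_sub hexp (integrable_const 1), integral_const_mul, integral_const_mul, mgf]
    simp only [integral_const, probReal_univ, smul_eq_mul, one_mul]
    ring
  rw [hsplit, ← Real.norm_eq_abs]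
  refine (norm_integral_le_of_norm_le_const (μ := P) (C := |t| ^ 3 * B ^ 3) ?_).trans_eq (by simp)
  filter_upwards [hXB] with ω h
  have htX : |t * X ω| ≤ 1 := by
    rw [abs_mul]
    exact (mul_le_mul_of_nonneg_left h (abs_nonneg t)).trans ht
  calc ‖Real.exp (t * X ω) - 1 - t * X ω - t ^ 2 / 2 * X ω ^ 2‖
        = |Real.exp (t * X ω) - 1 - t * X ω - (t * X ω) ^ 2 / 2| := by
          rw [Real.norm_eq_abs]; ring_nf
    _ ≤ |t * X ω| ^ 3 := Real.abs_exp_sub_one_sub_id_sub_sq_div_two_le htX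
    _ ≤ |t| ^ 3 * B ^ 3 := by rw [abs_mul, mul_pow]; gcongr

end MgfExpansion

lemma ProbabilityTheory.IndepFun.integral_sub_sq {Ω : Type*} [MeasurableSpace Ω]
    {P : Measure Ω} [IsProbabilityMeasure P] {X Y : Ω → ℝ} (hind : IndepFun X Y P)
    (hX : MemLp X 2 P) (hY : MemLp Y 2 P) :
    ∫ ω, (X ω - Y ω) ^ 2 ∂P
      = ∫ ω, (X ω - ∫ ω, X ω ∂P) ^ 2 ∂P + ∫ ω, (Y ω - ∫ ω, Y ω ∂P) ^ 2 ∂P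
        + (∫ ω, X ω ∂P - ∫ ω, Y ω ∂P) ^ 2 := by
  have hvar := variance_eq_sub (hX.sub hY)
  rw [variance_sub hX hY, hind.covariance_eq_zero hX hY,
    variance_eq_integral hX.aemeasurable, variance_eq_integral hY.aemeasurable] at hvar
  simp only [Pi.sub_apply, Pi.pow_apply] at hvar
  rw [integral_sub (hX.integrable one_le_two) (hY.integrable one_le_two)] at hvar
  linarith

lemma tendsto_div_sq_of_abs_sub_le {f g : ℝ → ℝ} {L C : ℝ} (hg : Tendsto g (𝓝[>] 0) (𝓝 L))
    (hfg : ∀ᶠ ε in 𝓝[>] 0, |f ε - ε ^ 2 * g ε| ≤ C * ε ^ 3) :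
    Tendsto (fun ε => f ε / ε ^ 2) (𝓝[>] 0) (𝓝 L) := by
  have hdiff : Tendsto (fun ε => f ε / ε ^ 2 - g ε) (𝓝[>] 0) (𝓝 0) := by
    refine squeeze_zero_norm' ?_ (by simpa using
      ((continuous_const_mul C).tendsto 0).mono_left nhdsWithin_le_nhds)
    filter_upwards [hfg, self_mem_nhdsWithin] with ε h (hε : 0 < ε)
    have hε2 : 0 < ε ^ 2 := pow_pos hε 2
    rw [Real.norm_eq_abs, div_sub' hε2.ne', abs_div, abs_of_pos hε2, div_le_iff₀ hε2]
    linarith [show C * ε * ε ^ 2 = C * ε ^ 3 by ring]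
  simpa using hdiff.add hg

lemma tendsto_of_mul_eventuallyEq {α : Type*} {l : Filter α} {f g h : α → ℝ} {a b : ℝ}
    (hfgh : ∀ᶠ x in l, f x * g x = h x) (hg : Tendsto g l (𝓝 a)) (ha : a ≠ 0)
    (hh : Tendsto h l (𝓝 b)) : Tendsto f l (𝓝 (b / a)) := by
  refine (hh.div hg ha).congr' ?_
  filter_upwards [hfgh, hg.eventually_ne ha] with x hx hgx
  rw [Pi.div_apply, ← hx, mul_div_cancel_right₀ _ hgx]

lemma eventually_abs_mul_mul_le_one (θ C : ℝ) : ∀ᶠ ε in 𝓝[>] (0 : ℝ), |θ * ε| * C ≤ 1 := by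
  have hcont : Continuous fun ε : ℝ => |θ * ε| * C := by fun_prop
  exact ((hcont.tendsto' 0 0 (by simp)).mono_left nhdsWithin_le_nhds).eventually
    (eventually_le_nhds zero_lt_one)

section OneStep

variable {Ω : Type*} {q a s : Ω → ℝ}

def queueUpdate (q a s : Ω → ℝ) (ω : Ω) : ℝ := max (q ω + a ω - s ω) 0

def unusedService (q a s : Ω → ℝ) (ω : Ω) : ℝ := queueUpdate q a s ω - (q ω + a ω - s ω)

lemma unusedService_mem_Icc {S : ℝ} {ω : Ω} (hq : 0 ≤ q ω) (ha : 0 ≤ a ω)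
    (hs : s ω ∈ Set.Icc 0 S) : unusedService q a s ω ∈ Set.Icc 0 S := by
  simp only [unusedService, queueUpdate]
  constructor
  · linarith [le_max_left (q ω + a ω - s ω) 0]
  · rcases le_total 0 (q ω + a ω - s ω) with h | h
    · rw [max_eq_left h]; linarith [hs.1, hs.2]
    · rw [max_eq_right h]; linarith [hs.2]

variable [MeasurableSpace Ω] {P : Measure Ω}

lemma measurable_queueUpdate (hq : Measurable q) (ha : Measurable a) (hs : Measurable s) :
    Measurable (queueUpdate q a s) :=
  ((hq.add ha).sub hs).max measurable_const

lemma measurable_unusedService (hq : Measurable q) (ha : Measurable a) (hs : Measurable s) :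
    Measurable (unusedService q a s) :=
  (measurable_queueUpdate hq ha hs).sub ((hq.add ha).sub hs)

lemma integral_unusedService (hid : IdentDistrib (queueUpdate q a s) q P P)
    (hq : Integrable q P) (ha : Integrable a P) (hs : Integrable s P) :
    ∫ ω, unusedService q a s ω ∂P = ∫ ω, s ω ∂P - ∫ ω, a ω ∂P := by
  have hq' : Integrable (queueUpdate q a s) P := hid.integrable_iff.mpr hq
  simp only [unusedService]
  rw [integral_sub (g := fun ω => q ω + a ω - s ω) hq' ((hq.add ha).sub hs),
    integral_sub (f := fun ω => q ω + a ω) (hq.add ha) hs,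
    integral_add hq ha, hid.integral_eq]
  ring

variable [IsProbabilityMeasure P]

lemma mgf_mul_one_sub_mgf_sub (hid : IdentDistrib (queueUpdate q a s) q P P)
    (hind : IndepFun (fun ω => (a ω, s ω)) q P) {t : ℝ}
    (hq : Integrable (fun ω => Real.exp (t * q ω)) P)
    (has : Integrable (fun ω => Real.exp (t * (a ω - s ω))) P) :
    mgf q P t * (1 - mgf (a - s) P t) = 1 - mgf (unusedService q a s) P (-t) := by
  have hind' : IndepFun q (a - s) P :=
    (hind.comp (measurable_fst.sub measurable_snd) measurable_id).symm
  have hsum : Integrable (fun ω => Real.exp (t * (q + (a - s)) ω)) P :=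
    hind'.integrable_exp_mul_add hq has
  have hupd : Integrable (fun ω => Real.exp (t * queueUpdate q a s ω)) P :=
    (hid.comp (measurable_const_mul t).exp).integrable_iff.mpr hq
  have hpt : ∀ ω, Real.exp (-t * unusedService q a s ω)
      = Real.exp (t * (q + (a - s)) ω) + 1 - Real.exp (t * queueUpdate q a s ω) := by
    intro ω
    simp only [unusedService, queueUpdate, Pi.add_apply, Pi.sub_apply, Real.exp_mul_max_zero]
    ring_nf
  have hmgf : mgf (unusedService q a s) P (-t)
      = mgf (q + (a - s)) P t + 1 - mgf (queueUpdate q a s) P t := by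
    simp only [mgf, hpt]
    rw [integral_sub (f := fun ω => Real.exp (t * (q + (a - s)) ω) + 1)
      (hsum.add (integrable_const 1)) hupd, integral_add hsum (integrable_const 1)]
    simp
  rw [hmgf, hind'.mgf_add hq.aestronglyMeasurable has.aestronglyMeasurable,
    mgf_congr_identDistrib hid]
  ring

end OneStep

section HeavyTraffic

variable {Ω : ℝ → Type*} [∀ ε, MeasurableSpace (Ω ε)] {P : ∀ ε, Measure (Ω ε)}
  [∀ ε, IsProbabilityMeasure (P ε)] {q a s : ∀ ε, Ω ε → ℝ} {μ A S : ℝ}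

lemma tendsto_integral_sub_sq {va vs : ℝ} (hma : ∀ ε, Measurable (a ε))
    (hms : ∀ ε, Measurable (s ε)) (hμ : 0 < μ)
    (ha : ∀ ε ∈ Set.Ioo 0 μ, ∀ᵐ ω ∂(P ε), a ε ω ∈ Set.Icc 0 A)
    (hs : ∀ ε ∈ Set.Ioo 0 μ, ∀ᵐ ω ∂(P ε), s ε ω ∈ Set.Icc 0 S)
    (hind : ∀ ε ∈ Set.Ioo 0 μ, IndepFun (a ε) (s ε) (P ε))
    (hEa : ∀ ε ∈ Set.Ioo 0 μ, ∫ ω, a ε ω ∂(P ε) = μ - ε)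
    (hEs : ∀ ε ∈ Set.Ioo 0 μ, ∫ ω, s ε ω ∂(P ε) = μ)
    (hvs : ∀ ε ∈ Set.Ioo 0 μ, ∫ ω, (s ε ω - μ) ^ 2 ∂(P ε) = vs)
    (hva : Tendsto (fun ε => ∫ ω, (a ε ω - (μ - ε)) ^ 2 ∂(P ε)) (𝓝[>] 0) (𝓝 va)) :
    Tendsto (fun ε => ∫ ω, (a ε ω - s ε ω) ^ 2 ∂(P ε)) (𝓝[>] 0) (𝓝 (va + vs)) := by
  have h := (hva.add_const vs).add
    ((continuous_pow 2).tendsto' (0 : ℝ) 0 (by simp) |>.mono_left nhdsWithin_le_nhds)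
  rw [add_zero] at h
  refine h.congr' ?_
  filter_upwards [Ioo_mem_nhdsGT hμ] with ε hε
  rw [(hind ε hε).integral_sub_sq (memLp_of_bounded (ha ε hε) (hma ε).aestronglyMeasurable 2)
    (memLp_of_bounded (hs ε hε) (hms ε).aestronglyMeasurable 2), hEa ε hε, hEs ε hε, hvs ε hε]
  ring

lemma tendsto_one_sub_mgf_sub_div_sq {v : ℝ} (hma : ∀ ε, Measurable (a ε))
    (hms : ∀ ε, Measurable (s ε)) (hμ : 0 < μ)
    (ha : ∀ ε ∈ Set.Ioo 0 μ, ∀ᵐ ω ∂(P ε), a ε ω ∈ Set.Icc 0 A)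
    (hs : ∀ ε ∈ Set.Ioo 0 μ, ∀ᵐ ω ∂(P ε), s ε ω ∈ Set.Icc 0 S)
    (hmean : ∀ ε ∈ Set.Ioo 0 μ, ∫ ω, s ε ω ∂(P ε) - ∫ ω, a ε ω ∂(P ε) = ε)
    (hv : Tendsto (fun ε => ∫ ω, (a ε ω - s ε ω) ^ 2 ∂(P ε)) (𝓝[>] 0) (𝓝 v)) (θ : ℝ) :
    Tendsto (fun ε => (1 - mgf (a ε - s ε) (P ε) (θ * ε)) / ε ^ 2) (𝓝[>] 0)
      (𝓝 (θ - θ ^ 2 / 2 * v)) := by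
  refine tendsto_div_sq_of_abs_sub_le
    (g := fun ε => θ - θ ^ 2 / 2 * ∫ ω, (a ε ω - s ε ω) ^ 2 ∂(P ε))
    (C := |θ| ^ 3 * (A + S) ^ 3) ((hv.const_mul _).const_sub θ) ?_
  filter_upwards [Ioo_mem_nhdsGT hμ, eventually_abs_mul_mul_le_one θ (A + S)] with ε hε ht
  have hB : ∀ᵐ ω ∂(P ε), |a ε ω - s ε ω| ≤ A + S := by
    filter_upwards [ha ε hε, hs ε hε] with ω ha hs
    exact abs_le.mpr ⟨by linarith [ha.1, ha.2, hs.2], by linarith [ha.2, hs.1, hs.2]⟩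
  have hE : ∫ ω, (a ε - s ε) ω ∂(P ε) = -ε := by
    rw [Pi.sub_def, integral_sub (.of_mem_Icc _ _ (hma ε).aemeasurable (ha ε hε))
      (.of_mem_Icc _ _ (hms ε).aemeasurable (hs ε hε))]
    linarith [hmean ε hε]
  have h := abs_mgf_sub_one_sub_mul_integral_sub_sq_le ((hma ε).sub (hms ε)) hB ht
  rw [hE, abs_sub_comm] at h
  calc _ = |1 + θ * ε * -ε + (θ * ε) ^ 2 / 2 * ∫ ω, (a ε ω - s ε ω) ^ 2 ∂(P ε)
        - mgf (a ε - s ε) (P ε) (θ * ε)| := by ring_nf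
    _ ≤ |θ * ε| ^ 3 * (A + S) ^ 3 := h
    _ = |θ| ^ 3 * (A + S) ^ 3 * ε ^ 3 := by rw [abs_mul, abs_of_pos hε.1]; ring

lemma tendsto_one_sub_mgf_unusedService_div_sq (hmq : ∀ ε, Measurable (q ε))
    (hma : ∀ ε, Measurable (a ε)) (hms : ∀ ε, Measurable (s ε)) (hμ : 0 < μ)
    (hq0 : ∀ ε ∈ Set.Ioo 0 μ, ∀ᵐ ω ∂(P ε), 0 ≤ q ε ω)
    (ha : ∀ ε ∈ Set.Ioo 0 μ, ∀ᵐ ω ∂(P ε), a ε ω ∈ Set.Icc 0 A)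
    (hs : ∀ ε ∈ Set.Ioo 0 μ, ∀ᵐ ω ∂(P ε), s ε ω ∈ Set.Icc 0 S)
    (hid : ∀ ε ∈ Set.Ioo 0 μ, IdentDistrib (queueUpdate (q ε) (a ε) (s ε)) (q ε) (P ε) (P ε))
    (hq : ∀ ε ∈ Set.Ioo 0 μ, Integrable (q ε) (P ε))
    (hmean : ∀ ε ∈ Set.Ioo 0 μ, ∫ ω, s ε ω ∂(P ε) - ∫ ω, a ε ω ∂(P ε) = ε) (θ : ℝ) :
    Tendsto (fun ε => (1 - mgf (unusedService (q ε) (a ε) (s ε)) (P ε) (-(θ * ε))) / ε ^ 2)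
      (𝓝[>] 0) (𝓝 θ) := by
  refine tendsto_div_sq_of_abs_sub_le (C := θ ^ 2 * S) tendsto_const_nhds ?_
  filter_upwards [Ioo_mem_nhdsGT hμ, eventually_abs_mul_mul_le_one θ S] with ε hε ht
  have hu : ∀ᵐ ω ∂(P ε), unusedService (q ε) (a ε) (s ε) ω ∈ Set.Icc 0 S := by
    filter_upwards [hq0 ε hε, ha ε hε, hs ε hε] with ω h0 ha hs
    exact unusedService_mem_Icc h0 ha.1 hs
  have hE : ∫ ω, unusedService (q ε) (a ε) (s ε) ω ∂(P ε) = ε := by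
    rw [integral_unusedService (hid ε hε) (hq ε hε)
      (.of_mem_Icc _ _ (hma ε).aemeasurable (ha ε hε))
      (.of_mem_Icc _ _ (hms ε).aemeasurable (hs ε hε)), hmean ε hε]
  have h := abs_mgf_sub_one_sub_mul_integral_le (measurable_unusedService (hmq ε) (hma ε) (hms ε))
    hu (t := -(θ * ε)) (by rwa [abs_neg])
  rw [hE, abs_sub_comm] at h
  calc _ = |1 + -(θ * ε) * ε - mgf (unusedService (q ε) (a ε) (s ε)) (P ε) (-(θ * ε))| := by
        ring_nf
    _ ≤ (-(θ * ε)) ^ 2 * S * ε := h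
    _ = θ ^ 2 * S * ε ^ 3 := by ring

end HeavyTraffic

theorem stmt4_general
    (μ σa σs Amax Smax : ℝ)
    (hμ : 0 < μ)
    (Ω : ℝ → Type) [∀ ε, MeasurableSpace (Ω ε)]
    (P : ∀ ε, Measure (Ω ε)) [∀ ε, IsProbabilityMeasure (P ε)]
    (q a s : ∀ ε, Ω ε → ℝ)
    (hmq : ∀ ε, Measurable (q ε)) (hma : ∀ ε, Measurable (a ε))
    (hms : ∀ ε, Measurable (s ε))
    (hq0 : ∀ ε ∈ Set.Ioo 0 μ, ∀ᵐ ω ∂(P ε), 0 ≤ q ε ω)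
    (ha_bdd : ∀ ε ∈ Set.Ioo 0 μ, ∀ᵐ ω ∂(P ε), a ε ω ∈ Set.Icc 0 Amax)
    (hs_bdd : ∀ ε ∈ Set.Ioo 0 μ, ∀ᵐ ω ∂(P ε), s ε ω ∈ Set.Icc 0 Smax)
    (h_as_q : ∀ ε ∈ Set.Ioo 0 μ, IndepFun (fun ω => (a ε ω, s ε ω)) (q ε) (P ε))
    (h_a_s : ∀ ε ∈ Set.Ioo 0 μ, IndepFun (a ε) (s ε) (P ε))
    (hEa : ∀ ε ∈ Set.Ioo 0 μ, ∫ ω, a ε ω ∂(P ε) = μ - ε)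
    (hEs : ∀ ε ∈ Set.Ioo 0 μ, ∫ ω, s ε ω ∂(P ε) = μ)
    (hVars : ∀ ε ∈ Set.Ioo 0 μ, ∫ ω, (s ε ω - μ) ^ 2 ∂(P ε) = σs ^ 2)
    (hVara : Tendsto (fun ε => ∫ ω, (a ε ω - (μ - ε)) ^ 2 ∂(P ε)) (𝓝[>] 0)
      (𝓝 (σa ^ 2)))
    (hstat : ∀ ε ∈ Set.Ioo 0 μ,
      Measure.map (fun ω => max (q ε ω + a ε ω - s ε ω) 0) (P ε)
        = Measure.map (q ε) (P ε))
    (Θ : ℝ)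
    (hmgf : ∀ ε ∈ Set.Ioo 0 μ, ∀ θ : ℝ, |θ| ≤ Θ →
      Integrable (fun ω => Real.exp (θ * ε * q ε ω)) (P ε)) :
    ∀ θ : ℝ, |θ| ≤ Θ → θ * ((σa ^ 2 + σs ^ 2) / 2) < 1 →
      Tendsto (fun ε => ∫ ω, Real.exp (θ * ε * q ε ω) ∂(P ε)) (𝓝[>] 0)
        (𝓝 (1 / (1 - θ * ((σa ^ 2 + σs ^ 2) / 2)))) := by
  intro θ hθΘ hθm
  rcases eq_or_ne θ 0 with rfl | hθ
  · simp
  have hid : ∀ ε ∈ Set.Ioo 0 μ, IdentDistrib (queueUpdate (q ε) (a ε) (s ε)) (q ε) (P ε) (P ε) :=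
    fun ε hε => ⟨(measurable_queueUpdate (hmq ε) (hma ε) (hms ε)).aemeasurable,
      (hmq ε).aemeasurable, hstat ε hε⟩
  have hmean : ∀ ε ∈ Set.Ioo 0 μ, ∫ ω, s ε ω ∂(P ε) - ∫ ω, a ε ω ∂(P ε) = ε := fun ε hε => by
    rw [hEa ε hε, hEs ε hε]; ring
  have hq : ∀ ε ∈ Set.Ioo 0 μ, Integrable (q ε) (P ε) := fun ε hε => by
    simpa using integrable_pow_of_integrable_exp_mul (mul_ne_zero hθ hε.1.ne')
      (hmgf ε hε θ hθΘ) (by simpa [neg_mul] using hmgf ε hε (-θ) (by rwa [abs_neg])) 1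
  have hN := tendsto_one_sub_mgf_sub_div_sq hma hms hμ ha_bdd hs_bdd hmean
    (tendsto_integral_sub_sq hma hms hμ ha_bdd hs_bdd h_a_s hEa hEs hVars hVara) θ
  have hD := tendsto_one_sub_mgf_unusedService_div_sq hmq hma hms hμ hq0 ha_bdd hs_bdd hid hq
    hmean θ
  have hK : θ - θ ^ 2 / 2 * (σa ^ 2 + σs ^ 2) ≠ 0 := by
    rw [show θ - θ ^ 2 / 2 * (σa ^ 2 + σs ^ 2) = θ * (1 - θ * ((σa ^ 2 + σs ^ 2) / 2)) by ring]
    exact mul_ne_zero hθ (by linarith)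
  rw [show 1 / (1 - θ * ((σa ^ 2 + σs ^ 2) / 2)) = θ / (θ - θ ^ 2 / 2 * (σa ^ 2 + σs ^ 2)) by
    field_simp]
  refine tendsto_of_mul_eventuallyEq (f := fun ε => mgf (q ε) (P ε) (θ * ε)) ?_ hN hK hD
  filter_upwards [Ioo_mem_nhdsGT hμ] with ε hε
  have has : ∀ᵐ ω ∂(P ε), a ε ω - s ε ω ∈ Set.Icc (-Smax) Amax := by
    filter_upwards [ha_bdd ε hε, hs_bdd ε hε] with ω ha hs
    exact ⟨by linarith [ha.1, hs.2], by linarith [ha.2, hs.1]⟩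
  rw [mul_div_assoc', mgf_mul_one_sub_mgf_sub (hid ε hε) (h_as_q ε hε) (hmgf ε hε θ hθΘ)
    (integrable_exp_mul_of_mem_Icc ((hma ε).sub (hms ε)).aemeasurable has)]

/-- Heavy-traffic limit of the MGF of the scaled single server queue length: for
every `θ` with `|θ| ≤ Θ` and `θ(σ_a² + σ_s²)/2 < 1`,
`E[e^{θ ε q_ε}] → 1/(1 − θ(σ_a² + σ_s²)/2)` as `ε → 0⁺`. -/
theorem stmt4
    (μ σa σs Amax Smax : ℝ)
    (hμ : 0 < μ) (hσa : 0 ≤ σa) (hσs : 0 ≤ σs)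
    (hpos : 0 < σa ^ 2 + σs ^ 2) (hA : 0 < Amax) (hS : 0 < Smax)
    (Ω : ℝ → Type) [∀ ε, MeasurableSpace (Ω ε)]
    (P : ∀ ε, Measure (Ω ε)) [∀ ε, IsProbabilityMeasure (P ε)]
    (q a s : ∀ ε, Ω ε → ℝ)
    (hmq : ∀ ε, Measurable (q ε)) (hma : ∀ ε, Measurable (a ε))
    (hms : ∀ ε, Measurable (s ε))
    (hq0 : ∀ ε ∈ Set.Ioo 0 μ, ∀ᵐ ω ∂(P ε), 0 ≤ q ε ω)
    (ha_bdd : ∀ ε ∈ Set.Ioo 0 μ, ∀ᵐ ω ∂(P ε), a ε ω ∈ Set.Icc 0 Amax)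
    (hs_bdd : ∀ ε ∈ Set.Ioo 0 μ, ∀ᵐ ω ∂(P ε), s ε ω ∈ Set.Icc 0 Smax)
    (h_as_q : ∀ ε ∈ Set.Ioo 0 μ, IndepFun (fun ω => (a ε ω, s ε ω)) (q ε) (P ε))
    (h_a_s : ∀ ε ∈ Set.Ioo 0 μ, IndepFun (a ε) (s ε) (P ε))
    (hEa : ∀ ε ∈ Set.Ioo 0 μ, ∫ ω, a ε ω ∂(P ε) = μ - ε)
    (hEs : ∀ ε ∈ Set.Ioo 0 μ, ∫ ω, s ε ω ∂(P ε) = μ)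
    (hVars : ∀ ε ∈ Set.Ioo 0 μ, ∫ ω, (s ε ω - μ) ^ 2 ∂(P ε) = σs ^ 2)
    (hVara : Tendsto (fun ε => ∫ ω, (a ε ω - (μ - ε)) ^ 2 ∂(P ε)) (𝓝[>] 0)
      (𝓝 (σa ^ 2)))
    (hstat : ∀ ε ∈ Set.Ioo 0 μ,
      Measure.map (fun ω => max (q ε ω + a ε ω - s ε ω) 0) (P ε)
        = Measure.map (q ε) (P ε))
    (Θ : ℝ) (hΘ : 0 < Θ)
    (hmgf : ∀ ε ∈ Set.Ioo 0 μ, ∀ θ : ℝ, |θ| ≤ Θ →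
      Integrable (fun ω => Real.exp (θ * ε * q ε ω)) (P ε)) :
    ∀ θ : ℝ, |θ| ≤ Θ → θ * ((σa ^ 2 + σs ^ 2) / 2) < 1 →
      Tendsto (fun ε => ∫ ω, Real.exp (θ * ε * q ε ω) ∂(P ε)) (𝓝[>] 0)
        (𝓝 (1 / (1 - θ * ((σa ^ 2 + σs ^ 2) / 2)))) :=
  stmt4_general μ σa σs Amax Smax hμ Ω P q a s hmq hma hms hq0 ha_bdd hs_bdd h_as_q h_a_s hEa hEs
    hVars hVara hstat Θ hmgf
end

section
/- Let n ≥ 1 and let c ∈ ℝⁿ satisfy c_i > 0 for every i. Let q, u ∈ ℝⁿ satisfy q_i u_i = 0 for every i ∈ {1, …, n}, and define q_⊥ := q − ⟨c, q⟩ c. Then for every α ∈ ℝ: Σ_{i=1}^n c_i u_i e^{−(α / c_i) q_{⊥i}} = ⟨c, u⟩ · e^{α ⟨c, q⟩}. -/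
/-- Where `uᵢ ≠ 0` we have `qᵢ = 0`, so `q_{⊥i} = -⟨c,q⟩ cᵢ` and the exponent collapses to
`α ⟨c,q⟩`; where `uᵢ = 0` both sides vanish. -/
lemma mul_exp_perp_eq_of_mul_eq_zero {c q u s α : ℝ} (hc : c ≠ 0) (hqu : q * u = 0) :
    c * u * Real.exp (-(α / c) * (q - s * c)) = c * u * Real.exp (α * s) := by
  rcases mul_eq_zero.mp hqu with rfl | rfl
  · congr 2
    field_simp
    ring
  · simp

theorem stmt12_general (n : ℕ) (c q u : Fin n → ℝ)
    (hc : ∀ i, 0 < c i)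
    (h : ∀ i, q i * u i = 0) (α : ℝ) :
    ∑ i, c i * u i * Real.exp (-(α / c i) * (q i - (∑ j, c j * q j) * c i))
      = (∑ i, c i * u i) * Real.exp (α * ∑ j, c j * q j) := by
  rw [Finset.sum_mul]
  exact Finset.sum_congr rfl fun i _ => mul_exp_perp_eq_of_mul_eq_zero (hc i).ne' (h i)

/-- If `cᵢ > 0` for all `i` and `qᵢ uᵢ = 0` for all `i`, then with
`q_⊥ = q − ⟨c,q⟩ c`, for every real `α`:
`Σᵢ cᵢ uᵢ e^{−(α/cᵢ) q_{⊥i}} = ⟨c,u⟩ e^{α ⟨c,q⟩}`. -/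
theorem stmt12 (n : ℕ) (hn : 1 ≤ n) (c q u : Fin n → ℝ)
    (hc : ∀ i, 0 < c i)
    (h : ∀ i, q i * u i = 0) (α : ℝ) :
    ∑ i, c i * u i * Real.exp (-(α / c i) * (q i - (∑ j, c j * q j) * c i))
      = (∑ i, c i * u i) * Real.exp (α * ∑ j, c j * q j) :=
  stmt12_general n c q u hc h α
end

section
/- Fix n ≥ 1, a vector c ∈ ℝⁿ with c ≥ 0 componentwise and ‖c‖ = 1, and constants S_max > 0, θ* > 0, C* < ∞, ε₀ > 0. For each ε ∈ (0, ε₀), let q_ε, a_ε, s_ε be ℝⁿ-valued random vectors with q_ε ≥ 0 coordinatewise a.s.; define (q_ε⁺)_i := max((q_ε)_i + (a_ε)_i − (s_ε)_i, 0) and (u_ε)_i := (q_ε⁺)_i − ((q_ε)_i + (a_ε)_i − (s_ε)_i). Assume: 0 ≤ (u_ε)_i ≤ S_max a.s. for all i; E[⟨c, u_ε⟩] ≤ ε; q_ε⁺ is identically distributed with q_ε; and the state space collapse bound E[e^{θ* ‖(q_ε)_⊥‖}] ≤ C* holds for all ε, where (q_ε)_⊥ := q_ε − ⟨c, q_ε⟩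 c. Then for every θ ∈ ℝ, E[(e^{θ ε ⟨c, q_ε⁺⟩} − 1)(e^{−θ ε ⟨c, u_ε⟩} − 1)] / ε² → 0 as ε → 0⁺. -/
open MeasureTheory ProbabilityTheory Filter Topology Real

/-!
Write `X = ⟨c, q⁺⟩`, `V = ⟨c, u⟩` and `T = ‖q⁺_⊥‖` (`perpNorm c q⁺`). Service is only left unused
at empty queues, so if `V > 0` there is an `i` with `c i > 0` and `q⁺ i = 0`; there
`(q⁺_⊥)_i = -X c_i`, hence `X ≤ T / c_min` for the least positive coordinate `c_min` of `c`.
For small `ε` this gives `|e^{θεX} - 1| = O(ε e^{θ⋆T/2})`, while `|e^{-θεV} - 1| = O(εV)`, so the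
integrand is `O(ε² V e^{θ⋆T/2})`. Splitting `V e^{θ⋆T/2} ≤ V/√ε + M √ε e^{θ⋆T}` for `V ≤ M`
and using `E V ≤ ε` and the state space collapse bound, transferred from `q` to `q⁺` by
stationarity, the expectation is `O(ε^{5/2})`.
-/

lemma abs_exp_sub_one_le_mul_exp_abs (t : ℝ) : |exp t - 1| ≤ |t| * exp |t| := by
  rcases le_total 0 t with ht | ht
  · rw [abs_of_nonneg ht, abs_of_nonneg (by linarith [one_le_exp ht])]
    nlinarith [add_one_le_exp (-t), exp_pos t, exp_neg t, mul_inv_cancel₀ (exp_pos t).ne']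
  · rw [abs_of_nonpos ht, abs_of_nonpos (by linarith [exp_le_one_iff.mpr ht])]
    nlinarith [add_one_le_exp t, one_le_exp (neg_nonneg.mpr ht), exp_pos t]

lemma abs_exp_sub_one_le_of_abs_le {y κ β T : ℝ} (hβ : 0 < β) (hκ : 0 ≤ κ) (hκβ : 2 * κ ≤ β)
    (hT : 0 ≤ T) (hy : |y| ≤ κ * T) : |exp y - 1| ≤ 2 * κ / β * exp (β * T) := by
  have hexp : exp |y| ≤ exp (β / 2 * T) := exp_le_exp.mpr (hy.trans (by nlinarith))
  have hlin : β / 2 * T ≤ exp (β / 2 * T) := by linarith [add_one_le_exp (β / 2 * T)]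
  have hsq : exp (β * T) = exp (β / 2 * T) * exp (β / 2 * T) := by rw [← exp_add]; ring_nf
  calc |exp y - 1| ≤ |y| * exp |y| := abs_exp_sub_one_le_mul_exp_abs y
    _ ≤ κ * T * exp (β / 2 * T) := mul_le_mul hy hexp (exp_pos _).le (by positivity)
    _ = 2 * κ / β * (β / 2 * T) * exp (β / 2 * T) := by field_simp
    _ ≤ 2 * κ / β * exp (β / 2 * T) * exp (β / 2 * T) := by gcongr
    _ = 2 * κ / β * exp (β * T) := by rw [hsq]; ring

lemma mul_le_div_add_mul_sq {V M E r : ℝ} (hV : 0 ≤ V) (hVM : V ≤ M) (hr : 0 < r) :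
    V * E ≤ V / r + M * r * E ^ 2 := by
  have hV' : V * E ≤ V / r + V * r * E ^ 2 := by
    rw [div_add' _ _ _ hr.ne', le_div_iff₀ hr]
    nlinarith [mul_nonneg hV (sq_nonneg (r * E)), mul_nonneg hV (sq_nonneg (r * E - 1))]
  nlinarith [mul_le_mul_of_nonneg_right hVM (by positivity : 0 ≤ r * E ^ 2)]

lemma max_zero_eq_zero_of_pos_sub {y : ℝ} (h : 0 < max y 0 - y) : max y 0 = 0 := by
  rw [max_eq_right]
  contrapose! h
  rw [max_eq_left h.le, sub_self]

section FiniteSum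

variable {ι : Type*} [Fintype ι]

noncomputable def perpNorm (c x : ι → ℝ) : ℝ := √(∑ i, (x i - (∑ j, c j * x j) * c i) ^ 2)

lemma continuous_perpNorm (c : ι → ℝ) : Continuous (perpNorm c) := by
  unfold perpNorm; fun_prop

lemma abs_mul_le_perpNorm_of_eq_zero {c x : ι → ℝ} {i : ι} (hx : x i = 0) :
    |(∑ j, c j * x j) * c i| ≤ perpNorm c x :=
  abs_le_sqrt <| by
    simpa [hx] using Finset.single_le_sum (f := fun j => (x j - (∑ k, c k * x k) * c j) ^ 2)
      (fun j _ => sq_nonneg _) (Finset.mem_univ i)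

lemma exists_pos_le_of_pos (c : ι → ℝ) : ∃ m > 0, ∀ i, 0 < c i → m ≤ c i := by
  classical
  by_cases h : ∃ i, 0 < c i
  · obtain ⟨i, hi, hmin⟩ := (Finset.univ.filter (0 < c ·)).exists_min_image c
      (by simpa [Finset.filter_nonempty_iff] using h)
    exact ⟨c i, by simpa using hi, fun j hj => hmin j (by simpa using hj)⟩
  · exact ⟨1, one_pos, fun i hi => absurd ⟨i, hi⟩ h⟩

theorem abs_mul_exp_sub_one_le_of_complementary {c x v : ι → ℝ} {cmin θ θstar ε ε₀ M : ℝ}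
    (hc : ∀ i, 0 ≤ c i) (hcmin : 0 < cmin) (hcmin_le : ∀ i, 0 < c i → cmin ≤ c i)
    (hx : ∀ i, 0 ≤ x i) (hv : ∀ i, 0 ≤ v i) (hxv : ∀ i, 0 < v i → x i = 0)
    (hVM : ∑ i, c i * v i ≤ M) (hθstar : 0 < θstar) (hε : 0 ≤ ε) (hεε₀ : ε ≤ ε₀)
    (hεθ : 4 * |θ| * ε ≤ θstar * cmin) :
    |(exp (θ * ε * ∑ i, c i * x i) - 1) * (exp (-(θ * ε) * ∑ i, c i * v i) - 1)|
      ≤ ε ^ 2 * (|θ| ^ 2 * exp (|θ| * ε₀ * M) * (4 / (θstar * cmin))) *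
        ((∑ i, c i * v i) * exp (θstar / 2 * perpNorm c x)) := by
  set X := ∑ i, c i * x i
  set V := ∑ i, c i * v i
  have hcv : ∀ i ∈ Finset.univ, 0 ≤ c i * v i := fun i _ => mul_nonneg (hc i) (hv i)
  have hV0 : 0 ≤ V := Finset.sum_nonneg hcv
  rcases hV0.eq_or_lt with hV | hV
  · rw [← hV]; simp
  obtain ⟨i, -, hi⟩ := (Finset.sum_pos_iff_of_nonneg hcv).mp hV
  have hX0 : 0 ≤ X := Finset.sum_nonneg fun i _ => mul_nonneg (hc i) (hx i)
  have hXT : X * cmin ≤ perpNorm c x :=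
    calc X * cmin ≤ X * c i := by gcongr; exact hcmin_le i (pos_of_mul_pos_left hi (hv i))
      _ ≤ perpNorm c x :=
        (le_abs_self _).trans
          (abs_mul_le_perpNorm_of_eq_zero (hxv i (pos_of_mul_pos_right hi (hc i))))
  have hqueue : |exp (θ * ε * X) - 1|
      ≤ 2 * (|θ| * ε / cmin) / (θstar / 2) * exp (θstar / 2 * perpNorm c x) := by
    refine abs_exp_sub_one_le_of_abs_le (by positivity) (by positivity) ?_ (sqrt_nonneg _) ?_
    · rw [← mul_div_assoc, div_le_iff₀ hcmin]; linarith
    · calc |θ * ε * X| = |θ| * ε / cmin * (X * cmin) := by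
            rw [abs_mul, abs_mul, abs_of_nonneg hε, abs_of_nonneg hX0]; field_simp
        _ ≤ |θ| * ε / cmin * perpNorm c x := by gcongr
  have hservice : |exp (-(θ * ε) * V) - 1| ≤ |θ| * ε * V * exp (|θ| * ε₀ * M) := by
    have habs : |-(θ * ε) * V| = |θ| * ε * V := by
      rw [abs_mul, abs_neg, abs_mul, abs_of_nonneg hε, abs_of_pos hV]
    refine (abs_exp_sub_one_le_mul_exp_abs _).trans ?_
    rw [habs]
    gcongr
    exact mul_nonneg (abs_nonneg θ) (hε.trans hεε₀)
  calc _ = |exp (θ * ε * X) - 1| * |exp (-(θ * ε) * V) - 1| := abs_mul _ _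
    _ ≤ 2 * (|θ| * ε / cmin) / (θstar / 2) * exp (θstar / 2 * perpNorm c x)
        * (|θ| * ε * V * exp (|θ| * ε₀ * M)) := by gcongr
    _ = _ := by field_simp; ring

lemma sum_mul_le_mul_sum {c v : ι → ℝ} {S : ℝ} (hc : ∀ i, 0 ≤ c i) (hv : ∀ i, v i ≤ S) :
    ∑ i, c i * v i ≤ S * ∑ i, c i :=
  calc ∑ i, c i * v i ≤ ∑ i, S * c i := Finset.sum_le_sum fun i _ => by
        rw [mul_comm S]; exact mul_le_mul_of_nonneg_left (hv i) (hc i)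
    _ = S * ∑ i, c i := (Finset.mul_sum ..).symm

end FiniteSum

section Integral

variable {ι Ω : Type*} [Fintype ι] [MeasurableSpace Ω] {P : Measure Ω} [IsFiniteMeasure P]

theorem norm_integral_mul_exp_sub_one_le_of_complementary {c : ι → ℝ} {x v : Ω → ι → ℝ}
    {cmin θ θstar ε ε₀ M C : ℝ}
    (hc : ∀ i, 0 ≤ c i) (hcmin : 0 < cmin) (hcmin_le : ∀ i, 0 < c i → cmin ≤ c i)
    (hx : ∀ ω i, 0 ≤ x ω i) (hxv : ∀ ω i, 0 < v ω i → x ω i = 0) (hmv : Measurable v)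
    (hv : ∀ᵐ ω ∂P, ∀ i, 0 ≤ v ω i) (hM : 0 ≤ M) (hVM : ∀ᵐ ω ∂P, ∑ i, c i * v ω i ≤ M)
    (hEV : ∫ ω, ∑ i, c i * v ω i ∂P ≤ ε)
    (hint : Integrable (fun ω => exp (θstar * perpNorm c (x ω))) P)
    (hC : ∫ ω, exp (θstar * perpNorm c (x ω)) ∂P ≤ C)
    (hθstar : 0 < θstar) (hε : 0 < ε) (hεε₀ : ε ≤ ε₀) (hεθ : 4 * |θ| * ε ≤ θstar * cmin) :
    ‖∫ ω, (exp (θ * ε * ∑ i, c i * x ω i) - 1) * (exp (-(θ * ε) * ∑ i, c i * v ω i) - 1) ∂P‖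
      ≤ |θ| ^ 2 * exp (|θ| * ε₀ * M) * (4 / (θstar * cmin)) * (1 + M * C) * √ε * ε ^ 2 := by
  set K := |θ| ^ 2 * exp (|θ| * ε₀ * M) * (4 / (θstar * cmin))
  set V := fun ω => ∑ i, c i * v ω i
  set F := fun ω => exp (θstar * perpNorm c (x ω))
  have hV0 : ∀ᵐ ω ∂P, 0 ≤ V ω := by
    filter_upwards [hv] with ω hω using Finset.sum_nonneg fun i _ => mul_nonneg (hc i) (hω i)
  have hVint : Integrable V P := by
    refine (integrable_const M).mono' (by fun_prop) ?_
    filter_upwards [hV0, hVM] with ω h0 hM using by rwa [Real.norm_eq_abs, abs_of_nonneg h0]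
  have hbound : ∀ᵐ ω ∂P,
      ‖(exp (θ * ε * ∑ i, c i * x ω i) - 1) * (exp (-(θ * ε) * V ω) - 1)‖
        ≤ ε ^ 2 * K * (V ω / √ε + M * √ε * F ω) := by
    filter_upwards [hv, hV0, hVM] with ω hvω hV0ω hVMω
    refine (abs_mul_exp_sub_one_le_of_complementary hc hcmin hcmin_le (hx ω) hvω (hxv ω) hVMω
      hθstar hε.le hεε₀ hεθ).trans ?_
    have hsq : exp (θstar / 2 * perpNorm c (x ω)) ^ 2 = F ω := by
      rw [← exp_nat_mul]; simp only [F]; ring_nf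
    gcongr
    rw [← hsq]
    exact mul_le_div_add_mul_sq hV0ω hVMω (sqrt_pos.mpr hε)
  calc _ ≤ ∫ ω, ε ^ 2 * K * (V ω / √ε + M * √ε * F ω) ∂P :=
        norm_integral_le_of_norm_le (((hVint.div_const _).add (hint.const_mul _)).const_mul _)
          hbound
    _ = ε ^ 2 * K * ((∫ ω, V ω ∂P) / √ε + M * √ε * ∫ ω, F ω ∂P) := by
        rw [integral_const_mul, integral_add (hVint.div_const _) (hint.const_mul _), integral_div,
          integral_const_mul]
    _ ≤ ε ^ 2 * K * (ε / √ε + M * √ε * C) := by gcongr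
    _ = K * (1 + M * C) * √ε * ε ^ 2 := by rw [div_sqrt]; ring

theorem switch_norm_integral_le {c : ι → ℝ} {q a s qp u : Ω → ι → ℝ}
    {cmin θ θstar ε ε₀ Smax C : ℝ}
    (hc : ∀ i, 0 ≤ c i) (hcmin : 0 < cmin) (hcmin_le : ∀ i, 0 < c i → cmin ≤ c i)
    (hS : 0 ≤ Smax) (hmq : Measurable q) (hma : Measurable a) (hms : Measurable s)
    (hqp_def : ∀ ω i, qp ω i = max (q ω i + a ω i - s ω i) 0)
    (hu_def : ∀ ω i, u ω i = qp ω i - (q ω i + a ω i - s ω i))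
    (hu_bdd : ∀ᵐ ω ∂P, ∀ i, u ω i ∈ Set.Icc 0 Smax) (hEu : ∫ ω, ∑ i, c i * u ω i ∂P ≤ ε)
    (hstat : P.map qp = P.map q)
    (hSSC_int : Integrable (fun ω => exp (θstar * perpNorm c (q ω))) P)
    (hSSC_bdd : ∫ ω, exp (θstar * perpNorm c (q ω)) ∂P ≤ C)
    (hθstar : 0 < θstar) (hε : 0 < ε) (hεε₀ : ε ≤ ε₀) (hεθ : 4 * |θ| * ε ≤ θstar * cmin) :
    ‖∫ ω, (exp (θ * ε * ∑ i, c i * qp ω i) - 1) * (exp (-(θ * ε) * ∑ i, c i * u ω i) - 1) ∂P‖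
      ≤ |θ| ^ 2 * exp (|θ| * ε₀ * (Smax * ∑ i, c i)) * (4 / (θstar * cmin))
        * (1 + Smax * (∑ i, c i) * C) * √ε * ε ^ 2 := by
  have hmqp : Measurable qp := by
    rw [show qp = _ from funext₂ hqp_def]; fun_prop
  have hmu : Measurable u := by
    rw [show u = _ from funext₂ hu_def]; fun_prop
  have hcompl : ∀ ω i, 0 < u ω i → qp ω i = 0 := fun ω i hpos => by
    rw [hu_def, hqp_def] at hpos
    rw [hqp_def, max_zero_eq_zero_of_pos_sub hpos]
  have hF := (IdentDistrib.mk hmqp.aemeasurable hmq.aemeasurable hstat).comp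
    (measurable_exp.comp ((continuous_perpNorm c).measurable.const_mul θstar))
  refine norm_integral_mul_exp_sub_one_le_of_complementary hc hcmin hcmin_le
    (fun ω i => (hqp_def ω i).symm ▸ le_max_right _ _) hcompl hmu ?_
    (mul_nonneg hS (Finset.sum_nonneg fun i _ => hc i)) ?_ hEu (hF.integrable_iff.mpr hSSC_int)
    (hF.integral_eq.trans_le hSSC_bdd) hθstar hε hεε₀ hεθ
  · filter_upwards [hu_bdd] with ω hω i using (hω i).1
  · filter_upwards [hu_bdd] with ω hω using sum_mul_le_mul_sum hc fun i => (hω i).2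

end Integral

theorem stmt13_general
    (n : ℕ) (c : Fin n → ℝ)
    (hc_nonneg : ∀ i, 0 ≤ c i)
    (Smax θstar Cstar ε₀ : ℝ)
    (hS : 0 < Smax) (hθstar : 0 < θstar) (hε₀ : 0 < ε₀)
    (Ω : ℝ → Type) [∀ ε, MeasurableSpace (Ω ε)]
    (P : ∀ ε, Measure (Ω ε)) [∀ ε, IsProbabilityMeasure (P ε)]
    (q a s qp u : ∀ ε, Ω ε → Fin n → ℝ)
    (hmq : ∀ ε, Measurable (q ε)) (hma : ∀ ε, Measurable (a ε))
    (hms : ∀ ε, Measurable (s ε))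
    (hqp_def : ∀ ε ω i, qp ε ω i = max (q ε ω i + a ε ω i - s ε ω i) 0)
    (hu_def : ∀ ε ω i, u ε ω i = qp ε ω i - (q ε ω i + a ε ω i - s ε ω i))
    (hu_bdd : ∀ ε ∈ Set.Ioo 0 ε₀, ∀ᵐ ω ∂(P ε), ∀ i, u ε ω i ∈ Set.Icc 0 Smax)
    (hEu : ∀ ε ∈ Set.Ioo 0 ε₀, (∫ ω, (∑ i, c i * u ε ω i) ∂(P ε)) ≤ ε)
    (hstat : ∀ ε ∈ Set.Ioo 0 ε₀,
      Measure.map (qp ε) (P ε) = Measure.map (q ε) (P ε))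
    (hSSC_int : ∀ ε ∈ Set.Ioo 0 ε₀,
      Integrable (fun ω => Real.exp (θstar *
        Real.sqrt (∑ i, (q ε ω i - (∑ j, c j * q ε ω j) * c i) ^ 2))) (P ε))
    (hSSC_bdd : ∀ ε ∈ Set.Ioo 0 ε₀,
      (∫ ω, Real.exp (θstar *
        Real.sqrt (∑ i, (q ε ω i - (∑ j, c j * q ε ω j) * c i) ^ 2)) ∂(P ε))
        ≤ Cstar) :
    ∀ θ : ℝ,
      Tendsto (fun ε =>
          (∫ ω, (Real.exp (θ * ε * ∑ i, c i * qp ε ω i) - 1)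
            * (Real.exp (-(θ * ε) * ∑ i, c i * u ε ω i) - 1) ∂(P ε)) / ε ^ 2)
        (𝓝[>] 0) (𝓝 0) := by
  intro θ
  obtain ⟨cmin, hcmin, hcmin_le⟩ := exists_pos_le_of_pos c
  have hsmall : ∀ᶠ ε in 𝓝[>] (0 : ℝ), ε ∈ Set.Ioo 0 ε₀ ∧ 4 * |θ| * ε ≤ θstar * cmin := by
    have hlim : Tendsto (fun ε => 4 * |θ| * ε) (𝓝[>] 0) (𝓝 0) :=
      ((continuous_const_mul _).tendsto' 0 0 (mul_zero _)).mono_left nhdsWithin_le_nhds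
    filter_upwards [Ioo_mem_nhdsGT hε₀, hlim.eventually (ge_mem_nhds (mul_pos hθstar hcmin))]
      with ε hε hεθ using ⟨hε, hεθ⟩
  set K := |θ| ^ 2 * exp (|θ| * ε₀ * (Smax * ∑ i, c i)) * (4 / (θstar * cmin))
    * (1 + Smax * (∑ i, c i) * Cstar)
  have hK : Tendsto (fun ε => K * √ε) (𝓝[>] 0) (𝓝 0) :=
    (((continuous_const_mul K).comp continuous_sqrt).tendsto' 0 0 (by simp)).mono_left
      nhdsWithin_le_nhds
  refine squeeze_zero_norm' ?_ hK
  filter_upwards [hsmall] with ε ⟨hε, hεθ⟩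
  rw [norm_div, norm_pow, Real.norm_of_nonneg hε.1.le, div_le_iff₀ (pow_pos hε.1 2)]
  exact switch_norm_integral_le hc_nonneg hcmin hcmin_le hS.le (hmq ε) (hma ε) (hms ε)
    (hqp_def ε) (hu_def ε) (hu_bdd ε hε) (hEu ε hε) (hstat ε hε) (hSSC_int ε hε)
    (hSSC_bdd ε hε) hθstar hε.1 hε.2.le hεθ

/-- Key `o(ε²)` estimate for the generalized switch: under the exponential state
space collapse bound, for every `θ ∈ ℝ`,
`E[(e^{θε⟨c,q_ε⁺⟩} − 1)(e^{−θε⟨c,u_ε⟩} − 1)]` is `o(ε²)` as `ε → 0⁺`. -/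
theorem stmt13
    (n : ℕ) (hn : 1 ≤ n) (c : Fin n → ℝ)
    (hc_nonneg : ∀ i, 0 ≤ c i) (hc_norm : Real.sqrt (∑ i, c i ^ 2) = 1)
    (Smax θstar Cstar ε₀ : ℝ)
    (hS : 0 < Smax) (hθstar : 0 < θstar) (hε₀ : 0 < ε₀)
    (Ω : ℝ → Type) [∀ ε, MeasurableSpace (Ω ε)]
    (P : ∀ ε, Measure (Ω ε)) [∀ ε, IsProbabilityMeasure (P ε)]
    (q a s qp u : ∀ ε, Ω ε → Fin n → ℝ)
    (hmq : ∀ ε, Measurable (q ε)) (hma : ∀ ε, Measurable (a ε))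
    (hms : ∀ ε, Measurable (s ε))
    (hqp_def : ∀ ε ω i, qp ε ω i = max (q ε ω i + a ε ω i - s ε ω i) 0)
    (hu_def : ∀ ε ω i, u ε ω i = qp ε ω i - (q ε ω i + a ε ω i - s ε ω i))
    (hq0 : ∀ ε ∈ Set.Ioo 0 ε₀, ∀ᵐ ω ∂(P ε), ∀ i, 0 ≤ q ε ω i)
    (hu_bdd : ∀ ε ∈ Set.Ioo 0 ε₀, ∀ᵐ ω ∂(P ε), ∀ i, u ε ω i ∈ Set.Icc 0 Smax)
    (hEu : ∀ ε ∈ Set.Ioo 0 ε₀, (∫ ω, (∑ i, c i * u ε ω i) ∂(P ε)) ≤ ε)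
    (hstat : ∀ ε ∈ Set.Ioo 0 ε₀,
      Measure.map (qp ε) (P ε) = Measure.map (q ε) (P ε))
    (hSSC_int : ∀ ε ∈ Set.Ioo 0 ε₀,
      Integrable (fun ω => Real.exp (θstar *
        Real.sqrt (∑ i, (q ε ω i - (∑ j, c j * q ε ω j) * c i) ^ 2))) (P ε))
    (hSSC_bdd : ∀ ε ∈ Set.Ioo 0 ε₀,
      (∫ ω, Real.exp (θstar *
        Real.sqrt (∑ i, (q ε ω i - (∑ j, c j * q ε ω j) * c i) ^ 2)) ∂(P ε))
        ≤ Cstar) :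
    ∀ θ : ℝ,
      Tendsto (fun ε =>
          (∫ ω, (Real.exp (θ * ε * ∑ i, c i * qp ε ω i) - 1)
            * (Real.exp (-(θ * ε) * ∑ i, c i * u ε ω i) - 1) ∂(P ε)) / ε ^ 2)
        (𝓝[>] 0) (𝓝 0) :=
  stmt13_general n c hc_nonneg Smax θstar Cstar ε₀ hS hθstar hε₀ Ω P q a s qp u hmq hma hms hqp_def
    hu_def hu_bdd hEu hstat hSSC_int hSSC_bdd
end

section
/- Fix n ≥ 1, a vector c ∈ ℝⁿ with c ≥ 0 componentwise and ‖c‖ = 1, and constants B_max > 0, θ* > 0, C* < ∞, K < ∞, ν ∈ (0, π/2], ε₀ > 0. For each ε ∈ (0, ε₀), let q_ε be an ℝⁿ-valued random vector with q_ε ≥ 0 coordinatewise a.s., s_ε an ℝⁿ-valued random vector, and B_ε a real random variable, defined on the same probability space, such that: 0 ≤ ⟨c, s_ε⟩ ≤ B_ε ≤ B_max almost surely; E[e^{θ* ‖(q_ε)_⊥‖}] ≤ C*, where (q_ε)_⊥ := q_ε − ⟨c, q_ε⟩ c; P(B_ε ≠ ⟨c, s_ε⟩) ≤ K ε; and almost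 surely on the event {B_ε ≠ ⟨c, s_ε⟩} one has ⟨c, q_ε⟩ ≤ cot(ν) · ‖(q_ε)_⊥‖. Then for every θ ∈ ℝ, E[(e^{θ ε ⟨c, q_ε⟩} − 1)(e^{θ ε (B_ε − ⟨c, s_ε⟩)} − 1)] / ε² → 0 as ε → 0⁺. -/
open MeasureTheory ProbabilityTheory Filter Topology Real

/-!
Write `X = ⟨c, q⟩ ≥ 0`, `Y = B - ⟨c, s⟩ ∈ [0, B_max]` and `Z = ‖q_⊥‖`. The integrand vanishes
unless `Y ≠ 0`, and there `X ≤ cot ν · Z`. Since `|eˣ - 1| ≤ |x| e^{|x|}`, the second factor is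
`O(ε)` and, once `|θ| ε cot ν ≤ θ*/4`, the first is `O(ε e^{θ* Z / 2})`. The split
`e^{θ* Z / 2} ≤ ε^{-1/2} + ε^{1/2} e^{θ* Z}`, integrated over the event `{Y ≠ 0}` of
probability `O(ε)` against the exponential moment bound, makes the expectation `O(ε^{5/2})`.
-/

theorem cot_nonneg_of_mem_Ioc {x : ℝ} (hx : x ∈ Set.Ioc 0 (π / 2)) : 0 ≤ cot x := by
  rw [cot_eq_cos_div_sin]
  exact div_nonneg (cos_nonneg_of_mem_Icc ⟨by linarith [pi_pos, hx.1], hx.2⟩)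
    (sin_pos_of_pos_of_lt_pi hx.1 (by linarith [pi_pos, hx.2])).le

theorem abs_exp_sub_one_le_abs_mul_exp_abs (x : ℝ) : |exp x - 1| ≤ |x| * exp |x| := by
  rcases le_total 0 x with hx | hx
  · have hexp : exp (-x) * exp x = 1 := by rw [← exp_add]; simp
    rw [abs_of_nonneg hx, abs_of_nonneg (by linarith [one_le_exp hx])]
    nlinarith [add_one_le_exp (-x), exp_pos x]
  · rw [abs_of_nonpos hx, abs_of_nonpos (by linarith [exp_le_one_iff.mpr hx])]
    nlinarith [add_one_le_exp x, one_le_exp (neg_nonneg.mpr hx)]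

theorem abs_exp_mul_sub_one_le_of_mem_Icc {t y M : ℝ} (hy : 0 ≤ y) (hyM : y ≤ M) :
    |exp (t * y) - 1| ≤ |t| * M * exp (|t| * M) := by
  have hty : |t * y| ≤ |t| * M := by
    rw [abs_mul, abs_of_nonneg hy]; exact mul_le_mul_of_nonneg_left hyM (abs_nonneg t)
  calc |exp (t * y) - 1| ≤ |t * y| * exp |t * y| := abs_exp_sub_one_le_abs_mul_exp_abs _
    _ ≤ |t| * M * exp (|t| * M) := by gcongr; exact (abs_nonneg _).trans hty

theorem le_exp_mul_div {s : ℝ} (hs : 0 < s) (z : ℝ) : z ≤ exp (s * z) / s := by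
  rw [le_div_iff₀ hs]; linarith [add_one_le_exp (s * z)]

theorem abs_exp_mul_sub_one_le_of_le_mul {t x κ z θ' : ℝ} (hθ' : 0 < θ') (hκ : 0 ≤ κ)
    (htκ : |t| * κ ≤ θ' / 4) (hx : 0 ≤ x) (hxz : x ≤ κ * z) (hz : 0 ≤ z) :
    |exp (t * x) - 1| ≤ 4 * |t| * κ / θ' * exp (θ' / 2 * z) := by
  have htx : |t * x| ≤ |t| * κ * z := by
    rw [abs_mul, abs_of_nonneg hx, mul_assoc]; exact mul_le_mul_of_nonneg_left hxz (abs_nonneg t)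
  have htxz : |t| * κ * z ≤ θ' / 4 * z := mul_le_mul_of_nonneg_right htκ hz
  have hsq : exp (θ' / 4 * z) * exp (θ' / 4 * z) = exp (θ' / 2 * z) := by
    rw [← exp_add]; ring_nf
  calc |exp (t * x) - 1| ≤ |t * x| * exp |t * x| := abs_exp_sub_one_le_abs_mul_exp_abs _
    _ ≤ |t| * κ * z * exp (θ' / 4 * z) := by gcongr; exact htx.trans htxz
    _ ≤ |t| * κ * (exp (θ' / 4 * z) / (θ' / 4)) * exp (θ' / 4 * z) := by
        gcongr; exact le_exp_mul_div (by positivity) z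
    _ = 4 * |t| * κ / θ' * exp (θ' / 2 * z) := by rw [← hsq]; field_simp

theorem le_inv_add_mul_sq {r : ℝ} (hr : 0 < r) (x : ℝ) : x ≤ r⁻¹ + r * x ^ 2 := by
  have h : r * x ≤ r * (r⁻¹ + r * x ^ 2) := by
    rw [mul_add, mul_inv_cancel₀ hr.ne']; nlinarith [sq_nonneg (r * x - 1)]
  exact le_of_mul_le_mul_left h hr

theorem abs_exp_sub_one_mul_exp_sub_one_le {t x y z κ θ' M r : ℝ} (hθ' : 0 < θ') (hκ : 0 ≤ κ)
    (htκ : |t| * κ ≤ θ' / 4) (hr : 0 < r) (hx : 0 ≤ x) (hxz : x ≤ κ * z) (hz : 0 ≤ z)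
    (hy : 0 ≤ y) (hyM : y ≤ M) :
    |(exp (t * x) - 1) * (exp (t * y) - 1)|
      ≤ 4 * |t| * κ / θ' * (|t| * M * exp (|t| * M)) * (r⁻¹ + r * exp (θ' * z)) := by
  have hsplit : exp (θ' / 2 * z) ≤ r⁻¹ + r * exp (θ' * z) := by
    have := le_inv_add_mul_sq hr (exp (θ' / 2 * z))
    rwa [← exp_nat_mul, Nat.cast_ofNat, ← mul_assoc, mul_div_cancel₀ _ two_ne_zero] at this
  rw [abs_mul, mul_right_comm]
  gcongr
  · exact (abs_exp_mul_sub_one_le_of_le_mul hθ' hκ htκ hx hxz hz).trans (by gcongr)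
  · exact abs_exp_mul_sub_one_le_of_mem_Icc hy hyM

theorem norm_integral_le_indicator_add {Ω : Type*} [MeasurableSpace Ω] {μ : Measure Ω}
    [IsFiniteMeasure μ] {f G : Ω → ℝ} {A : Set Ω} {a b : ℝ} (ha : 0 ≤ a)
    (hG : Integrable G μ) (hf : ∀ᵐ ω ∂μ, ‖f ω‖ ≤ A.indicator (fun _ => a) ω + b * G ω) :
    ‖∫ ω, f ω ∂μ‖ ≤ a * μ.real A + b * ∫ ω, G ω ∂μ := by
  set A' := toMeasurable μ A
  have hA' : MeasurableSet A' := measurableSet_toMeasurable μ A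
  have hind : Integrable (A'.indicator fun _ => a) μ := (integrable_const a).indicator hA'
  have hf' : ∀ᵐ ω ∂μ, ‖f ω‖ ≤ A'.indicator (fun _ => a) ω + b * G ω :=
    hf.mono fun ω h => h.trans <| add_le_add_left
      (Set.indicator_le_indicator_of_subset (subset_toMeasurable μ A) (fun _ => ha) ω) _
  calc ‖∫ ω, f ω ∂μ‖ ≤ ∫ ω, A'.indicator (fun _ => a) ω + b * G ω ∂μ :=
        norm_integral_le_of_norm_le (hind.add (hG.const_mul b)) hf'
    _ = a * μ.real A + b * ∫ ω, G ω ∂μ := by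
        rw [integral_add hind (hG.const_mul b), integral_indicator_const a hA', integral_const_mul,
          measureReal_def, measure_toMeasurable, smul_eq_mul, mul_comm, measureReal_def]

theorem norm_integral_exp_sub_one_mul_exp_sub_one_le {Ω : Type*} [MeasurableSpace Ω]
    {μ : Measure Ω} [IsFiniteMeasure μ] {X Y Z : Ω → ℝ} {t κ θ' M r : ℝ} (hθ' : 0 < θ')
    (hκ : 0 ≤ κ) (hM : 0 ≤ M) (htκ : |t| * κ ≤ θ' / 4) (hr : 0 < r)
    (hX : ∀ᵐ ω ∂μ, 0 ≤ X ω) (hY : ∀ᵐ ω ∂μ, 0 ≤ Y ω ∧ Y ω ≤ M)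
    (hXZ : ∀ᵐ ω ∂μ, Y ω ≠ 0 → X ω ≤ κ * Z ω) (hZ : ∀ ω, 0 ≤ Z ω)
    (hG : Integrable (fun ω => exp (θ' * Z ω)) μ) :
    ‖∫ ω, (exp (t * X ω) - 1) * (exp (t * Y ω) - 1) ∂μ‖
      ≤ 4 * |t| * κ / θ' * (|t| * M * exp (|t| * M))
        * (μ.real {ω | Y ω ≠ 0} / r + r * ∫ ω, exp (θ' * Z ω) ∂μ) := by
  set C := 4 * |t| * κ / θ' * (|t| * M * exp (|t| * M))
  have hbound := norm_integral_le_indicator_add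
    (f := fun ω => (exp (t * X ω) - 1) * (exp (t * Y ω) - 1)) (A := {ω | Y ω ≠ 0})
    (a := C * r⁻¹) (b := C * r) (by positivity) hG <| by
    filter_upwards [hX, hY, hXZ] with ω hXω ⟨hY0, hYM⟩ hXZω
    by_cases hYω : Y ω = 0
    · rw [Set.indicator_of_notMem (show ω ∉ {ω | Y ω ≠ 0} from fun h => h hYω), hYω, mul_zero,
        exp_zero, sub_self, mul_zero, norm_zero, zero_add]
      positivity
    · rw [Set.indicator_of_mem (show ω ∈ {ω | Y ω ≠ 0} from hYω), Real.norm_eq_abs]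
      refine (abs_exp_sub_one_mul_exp_sub_one_le hθ' hκ htκ hr hXω (hXZω hYω) (hZ ω) hY0
        hYM).trans_eq ?_
      ring
  calc _ ≤ C * r⁻¹ * μ.real {ω | Y ω ≠ 0} + C * r * ∫ ω, exp (θ' * Z ω) ∂μ := hbound
    _ = _ := by ring

theorem norm_integral_exp_sub_one_mul_exp_sub_one_le_mul_sqrt {Ω : Type*} [MeasurableSpace Ω]
    {μ : Measure Ω} [IsFiniteMeasure μ] {X Y Z : Ω → ℝ} {θ ε κ θ' M K C : ℝ} (hθ' : 0 < θ')
    (hκ : 0 ≤ κ) (hM : 0 ≤ M) (hε : 0 < ε) (hεκ : |θ| * ε * κ ≤ θ' / 4)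
    (hX : ∀ᵐ ω ∂μ, 0 ≤ X ω) (hY : ∀ᵐ ω ∂μ, 0 ≤ Y ω ∧ Y ω ≤ M)
    (hXZ : ∀ᵐ ω ∂μ, Y ω ≠ 0 → X ω ≤ κ * Z ω) (hZ : ∀ ω, 0 ≤ Z ω)
    (hG : Integrable (fun ω => exp (θ' * Z ω)) μ) (hYK : μ.real {ω | Y ω ≠ 0} ≤ K * ε)
    (hGC : ∫ ω, exp (θ' * Z ω) ∂μ ≤ C) :
    ‖∫ ω, (exp (θ * ε * X ω) - 1) * (exp (θ * ε * Y ω) - 1) ∂μ‖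
      ≤ 4 * |θ| * κ / θ' * (|θ| * M * exp (|θ| * ε * M)) * (K + C) * √ε * ε ^ 2 := by
  have hθε : |θ * ε| = |θ| * ε := by rw [abs_mul, abs_of_pos hε]
  have hbound := norm_integral_exp_sub_one_mul_exp_sub_one_le (t := θ * ε) (r := √ε) hθ' hκ hM
    (by rwa [hθε]) (sqrt_pos.mpr hε) hX hY hXZ hZ hG
  rw [hθε] at hbound
  calc _ ≤ _ := hbound
    _ ≤ 4 * (|θ| * ε) * κ / θ' * (|θ| * ε * M * exp (|θ| * ε * M)) * (K * ε / √ε + √ε * C) := by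
        gcongr
    _ = _ := by
        field_simp
        rw [sq_sqrt hε.le]
        ring

theorem stmt14_general
    (n : ℕ) (c : Fin n → ℝ)
    (hc_nonneg : ∀ i, 0 ≤ c i)
    (Bmax θstar Cstar K ν ε₀ : ℝ)
    (hB : 0 < Bmax) (hθstar : 0 < θstar) (hν : ν ∈ Set.Ioc 0 (Real.pi / 2))
    (hε₀ : 0 < ε₀)
    (Ω : ℝ → Type) [∀ ε, MeasurableSpace (Ω ε)]
    (P : ∀ ε, Measure (Ω ε)) [∀ ε, IsProbabilityMeasure (P ε)]
    (q s : ∀ ε, Ω ε → Fin n → ℝ) (B : ∀ ε, Ω ε → ℝ)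
    (hq0 : ∀ ε ∈ Set.Ioo 0 ε₀, ∀ᵐ ω ∂(P ε), ∀ i, 0 ≤ q ε ω i)
    (hsB : ∀ ε ∈ Set.Ioo 0 ε₀, ∀ᵐ ω ∂(P ε),
      0 ≤ ∑ i, c i * s ε ω i ∧ (∑ i, c i * s ε ω i) ≤ B ε ω ∧ B ε ω ≤ Bmax)
    (hSSC_int : ∀ ε ∈ Set.Ioo 0 ε₀,
      Integrable (fun ω => Real.exp (θstar *
        Real.sqrt (∑ i, (q ε ω i - (∑ j, c j * q ε ω j) * c i) ^ 2))) (P ε))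
    (hSSC_bdd : ∀ ε ∈ Set.Ioo 0 ε₀,
      (∫ ω, Real.exp (θstar *
        Real.sqrt (∑ i, (q ε ω i - (∑ j, c j * q ε ω j) * c i) ^ 2)) ∂(P ε))
        ≤ Cstar)
    (hprob : ∀ ε ∈ Set.Ioo 0 ε₀,
      ((P ε) {ω | B ε ω ≠ ∑ i, c i * s ε ω i}).toReal ≤ K * ε)
    (halign : ∀ ε ∈ Set.Ioo 0 ε₀, ∀ᵐ ω ∂(P ε),
      B ε ω ≠ (∑ i, c i * s ε ω i) →
      (∑ i, c i * q ε ω i) ≤ Real.cot ν *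
        Real.sqrt (∑ i, (q ε ω i - (∑ j, c j * q ε ω j) * c i) ^ 2)) :
    ∀ θ : ℝ,
      Tendsto (fun ε =>
          (∫ ω, (Real.exp (θ * ε * ∑ i, c i * q ε ω i) - 1)
            * (Real.exp (θ * ε * (B ε ω - ∑ i, c i * s ε ω i)) - 1) ∂(P ε)) / ε ^ 2)
        (𝓝[>] 0) (𝓝 0) := by
  intro θ
  have hcot := cot_nonneg_of_mem_Ioc hν
  have hsmall : ∀ᶠ ε in 𝓝[>] 0, |θ| * ε * cot ν ≤ θstar / 4 := by
    have : Tendsto (fun ε => |θ| * ε * cot ν) (𝓝[>] 0) (𝓝 0) :=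
      ((by fun_prop : Continuous fun ε => |θ| * ε * cot ν).tendsto' 0 0 (by simp)).mono_left
        nhdsWithin_le_nhds
    exact this.eventually (ge_mem_nhds (by positivity))
  set g : ℝ → ℝ := fun ε => 4 * |θ| * cot ν / θstar * (|θ| * Bmax * exp (|θ| * ε * Bmax))
    * (K + Cstar) * √ε
  have hg : Tendsto g (𝓝[>] 0) (𝓝 0) :=
    ((by fun_prop : Continuous g).tendsto' 0 0 (by simp [g])).mono_left nhdsWithin_le_nhds
  refine squeeze_zero_norm' ?_ hg
  filter_upwards [hsmall, Ioo_mem_nhdsGT hε₀] with ε hεsmall hε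
  have hbound := norm_integral_exp_sub_one_mul_exp_sub_one_le_mul_sqrt (μ := P ε)
    (X := fun ω => ∑ i, c i * q ε ω i) (Y := fun ω => B ε ω - ∑ i, c i * s ε ω i)
    (Z := fun ω => √(∑ i, (q ε ω i - (∑ j, c j * q ε ω j) * c i) ^ 2))
    hθstar hcot hB.le hε.1 hεsmall
    (by filter_upwards [hq0 ε hε] with ω hq using
      Finset.sum_nonneg fun i _ => mul_nonneg (hc_nonneg i) (hq i))
    (by filter_upwards [hsB ε hε] with ω ⟨hS, hSB, hBmax⟩ using ⟨by linarith, by linarith⟩)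
    (by filter_upwards [halign ε hε] with ω h hY using h (sub_ne_zero.mp hY))
    (fun _ => sqrt_nonneg _) (hSSC_int ε hε) (by simp only [sub_ne_zero]; exact hprob ε hε)
    (hSSC_bdd ε hε)
  rwa [norm_div, norm_pow, Real.norm_of_nonneg hε.1.le, div_le_iff₀ (pow_pos hε.1 2)]

/-- MaxWeight alignment estimate for the generalized switch: under the exponential
state space collapse bound, the `O(ε)` bound on `P(B_ε ≠ ⟨c,s_ε⟩)` and the
alignment property on that event, for every `θ ∈ ℝ`,
`E[(e^{θε⟨c,q_ε⟩} − 1)(e^{θε(B_ε − ⟨c,s_ε⟩)} − 1)]` is `o(ε²)` as `ε → 0⁺`. -/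
theorem stmt14
    (n : ℕ) (hn : 1 ≤ n) (c : Fin n → ℝ)
    (hc_nonneg : ∀ i, 0 ≤ c i) (hc_norm : Real.sqrt (∑ i, c i ^ 2) = 1)
    (Bmax θstar Cstar K ν ε₀ : ℝ)
    (hB : 0 < Bmax) (hθstar : 0 < θstar) (hν : ν ∈ Set.Ioc 0 (Real.pi / 2))
    (hε₀ : 0 < ε₀)
    (Ω : ℝ → Type) [∀ ε, MeasurableSpace (Ω ε)]
    (P : ∀ ε, Measure (Ω ε)) [∀ ε, IsProbabilityMeasure (P ε)]
    (q s : ∀ ε, Ω ε → Fin n → ℝ) (B : ∀ ε, Ω ε → ℝ)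
    (hmq : ∀ ε, Measurable (q ε)) (hms : ∀ ε, Measurable (s ε))
    (hmB : ∀ ε, Measurable (B ε))
    (hq0 : ∀ ε ∈ Set.Ioo 0 ε₀, ∀ᵐ ω ∂(P ε), ∀ i, 0 ≤ q ε ω i)
    (hsB : ∀ ε ∈ Set.Ioo 0 ε₀, ∀ᵐ ω ∂(P ε),
      0 ≤ ∑ i, c i * s ε ω i ∧ (∑ i, c i * s ε ω i) ≤ B ε ω ∧ B ε ω ≤ Bmax)
    (hSSC_int : ∀ ε ∈ Set.Ioo 0 ε₀,
      Integrable (fun ω => Real.exp (θstar *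
        Real.sqrt (∑ i, (q ε ω i - (∑ j, c j * q ε ω j) * c i) ^ 2))) (P ε))
    (hSSC_bdd : ∀ ε ∈ Set.Ioo 0 ε₀,
      (∫ ω, Real.exp (θstar *
        Real.sqrt (∑ i, (q ε ω i - (∑ j, c j * q ε ω j) * c i) ^ 2)) ∂(P ε))
        ≤ Cstar)
    (hprob : ∀ ε ∈ Set.Ioo 0 ε₀,
      ((P ε) {ω | B ε ω ≠ ∑ i, c i * s ε ω i}).toReal ≤ K * ε)
    (halign : ∀ ε ∈ Set.Ioo 0 ε₀, ∀ᵐ ω ∂(P ε),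
      B ε ω ≠ (∑ i, c i * s ε ω i) →
      (∑ i, c i * q ε ω i) ≤ Real.cot ν *
        Real.sqrt (∑ i, (q ε ω i - (∑ j, c j * q ε ω j) * c i) ^ 2)) :
    ∀ θ : ℝ,
      Tendsto (fun ε =>
          (∫ ω, (Real.exp (θ * ε * ∑ i, c i * q ε ω i) - 1)
            * (Real.exp (θ * ε * (B ε ω - ∑ i, c i * s ε ω i)) - 1) ∂(P ε)) / ε ^ 2)
        (𝓝[>] 0) (𝓝 0) :=
  stmt14_general n c hc_nonneg Bmax θstar Cstar K ν ε₀ hB hθstar hν hε₀ Ω P q s B hq0 hsB hSSC_int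
    hSSC_bdd hprob halign
end
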